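/- arXiv:2303.11559 — 2 statements merged into one kernel-verified Lean document; each statement's English description precedes it below -/
import Mathlib

section
/- Let d ≥ 1 and let ν be a probability measure on the space of d×d complex matrices such that ν-almost every matrix P is Hermitian positive definite, and suppose ν is invariant under unitary conjugation: for every unitary d×d matrix U, the pushforward of ν under P ↦ U*·P·U equals ν. Assume that for unit vectors u the function P ↦ log(Re(u*·P·u)) is ν-integrable. Then: (a) for any two unit vectors u, v ∈ ℂ^d, ∫ log(Re(u*·P·u)) dν(P) = ∫ log(Re(v*·P·v)) dν(P); and (b) for every nonzero a ∈ ℂ^d and unit vector u, ∫ log(Re(a*·P·a)) dν(P) = log‖a‖² + ∫ log(Re(u*·P·u)) dν(P). (This is the lemma showing that for any unitarily invariant measure on Bergman metrics, the expected Bergman potential E_ν φ_P equals the reference potential φ_I up to an additive constant.) -/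
/-! The unitary group acts transitively on unit vectors, and `(U u)ᴴ P (U u) = uᴴ (Uᴴ P U) u`,
so invariance of `ν` under `P ↦ Uᴴ P U` makes the expectation of `log (uᴴ P u)` independent of
the unit vector `u`. A nonzero `a` is `√s • w` with `s = ∑ |a_j|²` and `w` a unit vector, and
wherever `P` is positive definite `log (aᴴ P a) = log s + log (wᴴ P w)`; integrating gives (b). -/

open MeasureTheory Matrix
open scoped ComplexOrder

/-- Borel measurable structure on `d × d` complex matrices, viewing a matrix as
an element of `ℂ^{d×d}`. -/
noncomputable instance matrixMeasurableSpace (d : ℕ) :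
    MeasurableSpace (Matrix (Fin d) (Fin d) ℂ) :=
  (inferInstance : MeasurableSpace (Fin d → Fin d → ℂ))

open Module

section
variable {𝕜 E : Type*} [RCLike 𝕜] [NormedAddCommGroup E] [InnerProductSpace 𝕜 E]
  [FiniteDimensional 𝕜 E]

theorem exists_orthonormalBasis_apply_eq {ι : Type*} [Fintype ι]
    (hcard : finrank 𝕜 E = Fintype.card ι) (i : ι) {x : E} (hx : ‖x‖ = 1) :
    ∃ b : OrthonormalBasis ι 𝕜 E, b i = x := by
  have hx' : Orthonormal 𝕜 (({i} : Set ι).domRestrict fun _ => x) :=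
    orthonormal_subsingleton_iff.mpr fun _ => hx
  obtain ⟨b, hb⟩ := hx'.exists_orthonormalBasis_extension_of_card_eq hcard
  exact ⟨b, hb i rfl⟩

theorem exists_linearIsometryEquiv_apply_eq {x y : E} (hx : ‖x‖ = 1) (hy : ‖y‖ = 1) :
    ∃ f : E ≃ₗᵢ[𝕜] E, f x = y := by
  have hrank : 0 < finrank 𝕜 E :=
    finrank_pos_iff_exists_ne_zero.mpr ⟨x, norm_ne_zero_iff.mp (by simp [hx])⟩
  let i : Fin (finrank 𝕜 E) := ⟨0, hrank⟩
  obtain ⟨b, hb⟩ := exists_orthonormalBasis_apply_eq (𝕜 := 𝕜) (by simp) i hx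
  obtain ⟨c, hc⟩ := exists_orthonormalBasis_apply_eq (𝕜 := 𝕜) (by simp) i hy
  exact ⟨b.equiv c (Equiv.refl _), by simp [← hb, ← hc, OrthonormalBasis.equiv_apply_basis]⟩

end

section
variable {𝕜 ι : Type*} [RCLike 𝕜] [Fintype ι]

theorem exists_mem_unitaryGroup_mulVec_eq [DecidableEq ι] {u v : ι → 𝕜}
    (hu : ∑ i, ‖u i‖ ^ 2 = 1) (hv : ∑ i, ‖v i‖ ^ 2 = 1) :
    ∃ U ∈ unitaryGroup ι 𝕜, U *ᵥ u = v := by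
  have hnorm : ∀ w : ι → 𝕜, ∑ i, ‖w i‖ ^ 2 = 1 → ‖WithLp.toLp 2 w‖ = 1 := fun w hw => by
    simp [EuclideanSpace.norm_eq, hw]
  obtain ⟨f, hf⟩ := exists_linearIsometryEquiv_apply_eq (𝕜 := 𝕜) (hnorm u hu) (hnorm v hv)
  let e := (EuclideanSpace.basisFun ι 𝕜).toBasis
  refine ⟨f.toMatrix e e, f.toMatrix_mem_unitaryGroup _ _, ?_⟩
  have h := LinearMap.toMatrix_mulVec_repr e e f.toLinearMap (WithLp.toLp 2 u)
  simp only [LinearEquiv.coe_coe, LinearIsometryEquiv.coe_toLinearEquiv, hf] at h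
  exact h

theorem sum_norm_sq_pos {a : ι → 𝕜} (ha : a ≠ 0) : 0 < ∑ i, ‖a i‖ ^ 2 := by
  obtain ⟨i, hi⟩ := Function.ne_iff.mp ha
  exact Finset.sum_pos' (fun i _ => by positivity) ⟨i, Finset.mem_univ _, by positivity⟩

theorem exists_eq_sqrt_sum_norm_sq_smul {a : ι → 𝕜} (ha : a ≠ 0) :
    ∃ u : ι → 𝕜, ∑ i, ‖u i‖ ^ 2 = 1 ∧ a = √(∑ i, ‖a i‖ ^ 2) • u := by
  have hs := sum_norm_sq_pos ha
  have hr : √(∑ i, ‖a i‖ ^ 2) ≠ 0 := (Real.sqrt_pos.mpr hs).ne'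
  refine ⟨(√(∑ i, ‖a i‖ ^ 2))⁻¹ • a, ?_, by rw [smul_smul, mul_inv_cancel₀ hr, one_smul]⟩
  simp only [Pi.smul_apply, norm_smul, mul_pow, ← Finset.mul_sum, norm_inv, Real.norm_eq_abs,
    abs_of_nonneg (Real.sqrt_nonneg _), inv_pow, Real.sq_sqrt hs.le]
  exact inv_mul_cancel₀ hs.ne'

theorem dotProduct_mulVec_real_smul (P : Matrix ι ι 𝕜) (r : ℝ) (x : ι → 𝕜) :
    star (r • x) ⬝ᵥ P *ᵥ (r • x) = (r ^ 2) • (star x ⬝ᵥ P *ᵥ x) := by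
  rw [star_smul, star_trivial, mulVec_smul, smul_dotProduct, dotProduct_smul, smul_smul, sq]

end

theorem dotProduct_conjTranspose_mul_mul_mulVec {R ι : Type*} [CommSemiring R] [StarRing R]
    [Fintype ι] (P U : Matrix ι ι R) (u : ι → R) :
    star u ⬝ᵥ (Uᴴ * P * U) *ᵥ u = star (U *ᵥ u) ⬝ᵥ P *ᵥ (U *ᵥ u) := by
  rw [← mulVec_mulVec, ← mulVec_mulVec, dotProduct_mulVec, ← star_mulVec]

theorem Matrix.PosDef.log_re_dotProduct_mulVec_real_smul {ι : Type*} [Fintype ι]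
    {P : Matrix ι ι ℂ} (hP : P.PosDef) {x : ι → ℂ} (hx : x ≠ 0) {r : ℝ} (hr : r ≠ 0) :
    Real.log (star (r • x) ⬝ᵥ P *ᵥ (r • x)).re
      = Real.log (r ^ 2) + Real.log (star x ⬝ᵥ P *ᵥ x).re := by
  have hq : 0 < (star x ⬝ᵥ P *ᵥ x).re := (Complex.lt_def.mp (hP.dotProduct_mulVec_pos hx)).1
  rw [dotProduct_mulVec_real_smul, Complex.smul_re, smul_eq_mul,
    Real.log_mul (pow_ne_zero 2 hr) hq.ne']

instance matrixBorelSpace (d : ℕ) : BorelSpace (Matrix (Fin d) (Fin d) ℂ) :=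
  inferInstanceAs (BorelSpace (Fin d → Fin d → ℂ))

section
variable {E : Type*} [NormedAddCommGroup E] [NormedSpace ℝ E] {d : ℕ}
  {ν : Measure (Matrix (Fin d) (Fin d) ℂ)}

theorem integral_conj_eq_of_map_conj_eq {U : Matrix (Fin d) (Fin d) ℂ}
    (hU : ν.map (fun P => Uᴴ * P * U) = ν) {f : Matrix (Fin d) (Fin d) ℂ → E}
    (hf : AEStronglyMeasurable f ν) :
    ∫ P, f (Uᴴ * P * U) ∂ν = ∫ P, f P ∂ν := by
  have hconj : Measurable fun P : Matrix (Fin d) (Fin d) ℂ => Uᴴ * P * U := by fun_prop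
  rw [← integral_map hconj.aemeasurable (by rwa [hU]), hU]

theorem integral_comp_dotProduct_mulVec_eq_of_unitary_invariant
    (hinv : ∀ U : Matrix (Fin d) (Fin d) ℂ, Uᴴ * U = 1 → ν.map (fun P => Uᴴ * P * U) = ν)
    (g : ℂ → E) {u v : Fin d → ℂ} (hu : ∑ j, ‖u j‖ ^ 2 = 1) (hv : ∑ j, ‖v j‖ ^ 2 = 1)
    (hg : AEStronglyMeasurable (fun P => g (star u ⬝ᵥ P *ᵥ u)) ν) :
    ∫ P, g (star u ⬝ᵥ P *ᵥ u) ∂ν = ∫ P, g (star v ⬝ᵥ P *ᵥ v) ∂ν := by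
  obtain ⟨U, hU, rfl⟩ := exists_mem_unitaryGroup_mulVec_eq hu hv
  rw [← integral_conj_eq_of_map_conj_eq (hinv U (mem_unitaryGroup_iff'.mp hU)) hg]
  simp_rw [dotProduct_conjTranspose_mul_mul_mulVec]

end

theorem unitary_invariant_expected_potential_general (d : ℕ)
    (ν : Measure (Matrix (Fin d) (Fin d) ℂ)) [IsProbabilityMeasure ν]
    (hpos : ∀ᵐ P ∂ν, Matrix.PosDef P)
    (hinv : ∀ U : Matrix (Fin d) (Fin d) ℂ, Uᴴ * U = 1 →
      Measure.map (fun P => Uᴴ * P * U) ν = ν)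
    (hint : ∀ u : Fin d → ℂ, (∑ j, ‖u j‖ ^ 2) = 1 →
      Integrable (fun P => Real.log ((star u ⬝ᵥ Matrix.mulVec P u).re)) ν) :
    (∀ u v : Fin d → ℂ,
      (∑ j, ‖u j‖ ^ 2) = 1 → (∑ j, ‖v j‖ ^ 2) = 1 →
      ∫ P, Real.log ((star u ⬝ᵥ Matrix.mulVec P u).re) ∂ν
        = ∫ P, Real.log ((star v ⬝ᵥ Matrix.mulVec P v).re) ∂ν)
    ∧ (∀ a u : Fin d → ℂ, a ≠ 0 → (∑ j, ‖u j‖ ^ 2) = 1 →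
      ∫ P, Real.log ((star a ⬝ᵥ Matrix.mulVec P a).re) ∂ν
        = Real.log (∑ j, ‖a j‖ ^ 2)
          + ∫ P, Real.log ((star u ⬝ᵥ Matrix.mulVec P u).re) ∂ν) := by
  refine ⟨fun u v hu hv => integral_comp_dotProduct_mulVec_eq_of_unitary_invariant hinv
    (fun z => Real.log z.re) hu hv (hint u hu).aestronglyMeasurable, fun a u ha hu => ?_⟩
  obtain ⟨w, hw, haw⟩ := exists_eq_sqrt_sum_norm_sq_smul ha
  have hw0 : w ≠ 0 := by rintro rfl; simp at hw
  have hs := sum_norm_sq_pos ha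
  set s := ∑ j, ‖a j‖ ^ 2
  have hlog : ∀ᵐ P ∂ν, Real.log (star a ⬝ᵥ P *ᵥ a).re
      = Real.log s + Real.log (star w ⬝ᵥ P *ᵥ w).re := by
    filter_upwards [hpos] with P hP
    rw [haw, hP.log_re_dotProduct_mulVec_real_smul hw0 (Real.sqrt_pos.mpr hs).ne',
      Real.sq_sqrt hs.le]
  rw [integral_congr_ae hlog, integral_add (integrable_const _) (hint w hw), integral_const,
    probReal_univ, one_smul]
  exact congrArg _ (integral_comp_dotProduct_mulVec_eq_of_unitary_invariant hinv
    (fun z => Real.log z.re) hw hu (hint w hw).aestronglyMeasurable)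

/-- For a unitarily invariant probability measure `ν` on positive Hermitian
matrices, (a) the expectation of `log(u* P u)` is the same for all unit vectors
`u`, and (b) for any nonzero vector `a`, the expectation of `log(a* P a)` equals
`log ‖a‖²` plus that common constant. -/
theorem unitary_invariant_expected_potential (d : ℕ) (hd : 1 ≤ d)
    (ν : Measure (Matrix (Fin d) (Fin d) ℂ)) [IsProbabilityMeasure ν]
    (hpos : ∀ᵐ P ∂ν, Matrix.PosDef P)
    (hinv : ∀ U : Matrix (Fin d) (Fin d) ℂ, Uᴴ * U = 1 →
      Measure.map (fun P => Uᴴ * P * U) ν = ν)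
    (hint : ∀ u : Fin d → ℂ, (∑ j, ‖u j‖ ^ 2) = 1 →
      Integrable (fun P => Real.log ((star u ⬝ᵥ Matrix.mulVec P u).re)) ν) :
    (∀ u v : Fin d → ℂ,
      (∑ j, ‖u j‖ ^ 2) = 1 → (∑ j, ‖v j‖ ^ 2) = 1 →
      ∫ P, Real.log ((star u ⬝ᵥ Matrix.mulVec P u).re) ∂ν
        = ∫ P, Real.log ((star v ⬝ᵥ Matrix.mulVec P v).re) ∂ν)
    ∧ (∀ a u : Fin d → ℂ, a ≠ 0 → (∑ j, ‖u j‖ ^ 2) = 1 →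
      ∫ P, Real.log ((star a ⬝ᵥ Matrix.mulVec P a).re) ∂ν
        = Real.log (∑ j, ‖a j‖ ^ 2)
          + ∫ P, Real.log ((star u ⬝ᵥ Matrix.mulVec P u).re) ∂ν) :=
  unitary_invariant_expected_potential_general d ν hpos hinv hint
end

section
/- For every t ∈ ℝ, ∫_ℂ e^{−|ξ|²} · |2|ξ|² − t²| dA(ξ) = π·(t² − 2 + 4·e^{−t²/2}), where dA is Lebesgue (area) measure on ℂ ≅ ℝ². (This evaluates, in complex dimension one, the Gaussian integral over 1×1 complex symmetric matrices appearing in the universal density f_m of critical values of random holomorphic sections, yielding the explicit form of f₁.) -/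
/-!
In polar coordinates the integral is `2π ∫₀^∞ |G'(r)| dr` for
`G(r) = e^{-r²} (r² + 1 - t²/2)`, since `G'(r) = r e^{-r²} (t² - 2r²)`. The primitive `G`
increases on `[0, c]` and decreases to `0` on `[c, ∞)`, where `c² = t²/2`, so the total
variation of `G` is `2 G(c) - G(0) = 2 e^{-t²/2} - 1 + t²/2`.
-/

open MeasureTheory Set Real Filter Topology

theorem Complex.integral_fun_norm (f : ℝ → ℝ) :
    ∫ ξ : ℂ, f ‖ξ‖ = 2 * π * ∫ r in Ioi 0, r * f r := by
  have hball : volume.real (Metric.ball (0 : ℂ) 1) = π := by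
    simp [measureReal_def, Complex.volume_ball]
  simpa [Complex.finrank_real_complex, hball, mul_assoc] using
    integral_fun_norm_addHaar (volume : Measure ℂ) f

theorem integral_Ioi_abs_deriv_of_unimodal {g g' : ℝ → ℝ} {a c l : ℝ} (hac : a ≤ c)
    (hderiv : ∀ x ∈ Ici a, HasDerivAt g (g' x) x) (hint : IntervalIntegrable g' volume a c)
    (hinc : ∀ x ∈ Ioc a c, 0 ≤ g' x) (hdec : ∀ x ∈ Ioi c, g' x ≤ 0)
    (hg : Tendsto g atTop (𝓝 l)) :
    ∫ x in Ioi a, |g' x| = 2 * g c - g a - l := by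
  have hderiv_c : ∀ x ∈ Ici c, HasDerivAt g (g' x) x := fun x hx => hderiv x (hac.trans hx)
  have head : ∫ x in Ioc a c, |g' x| = g c - g a := by
    rw [setIntegral_congr_fun measurableSet_Ioc (fun x hx => abs_of_nonneg (hinc x hx)),
      ← intervalIntegral.integral_of_le hac]
    refine intervalIntegral.integral_eq_sub_of_hasDerivAt (fun x hx => hderiv x ?_) hint
    rw [uIcc_of_le hac] at hx
    exact hx.1
  have tail_eq : EqOn (fun x => |g' x|) (fun x => -g' x) (Ioi c) :=
    fun x hx => abs_of_nonpos (hdec x hx)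
  have tail : ∫ x in Ioi c, |g' x| = g c - l := by
    rw [setIntegral_congr_fun measurableSet_Ioi tail_eq, integral_neg,
      integral_Ioi_of_hasDerivAt_of_nonpos' hderiv_c hdec hg]
    ring
  have hint_head : IntegrableOn (fun x => |g' x|) (Ioc a c) :=
    (intervalIntegrable_iff_integrableOn_Ioc_of_le hac).1 hint.abs
  have hint_tail : IntegrableOn (fun x => |g' x|) (Ioi c) :=
    ((integrableOn_Ioi_deriv_of_nonpos' hderiv_c hdec hg).neg).congr_fun tail_eq.symm
      measurableSet_Ioi
  rw [← Ioc_union_Ioi_eq_Ioi hac, setIntegral_union (Ioc_disjoint_Ioi le_rfl) measurableSet_Ioi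
    hint_head hint_tail, head, tail]
  ring

noncomputable def radialPrimitive (t r : ℝ) : ℝ := exp (-r ^ 2) * (r ^ 2 + 1 - t ^ 2 / 2)

theorem hasDerivAt_radialPrimitive (t r : ℝ) :
    HasDerivAt (radialPrimitive t) (r * exp (-r ^ 2) * (t ^ 2 - 2 * r ^ 2)) r := by
  have hexp : HasDerivAt (fun r : ℝ => exp (-r ^ 2)) (exp (-r ^ 2) * -(2 * r)) r := by
    simpa using ((hasDerivAt_pow 2 r).neg).exp
  have hpoly : HasDerivAt (fun r : ℝ => r ^ 2 + 1 - t ^ 2 / 2) (2 * r) r := by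
    simpa using ((hasDerivAt_pow 2 r).add_const 1).sub_const (t ^ 2 / 2)
  refine (hexp.mul hpoly).congr_deriv ?_
  ring

theorem tendsto_radialPrimitive_atTop (t : ℝ) :
    Tendsto (radialPrimitive t) atTop (𝓝 0) := by
  have hsq : Tendsto (fun r : ℝ => r ^ 2) atTop atTop := tendsto_pow_atTop two_ne_zero
  have hlin : Tendsto (fun y : ℝ => y * exp (-y)) atTop (𝓝 0) := by
    simpa using tendsto_pow_mul_exp_neg_atTop_nhds_zero 1
  have hconst : Tendsto (fun y : ℝ => exp (-y) * (1 - t ^ 2 / 2)) atTop (𝓝 0) := by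
    simpa using tendsto_exp_neg_atTop_nhds_zero.mul_const (1 - t ^ 2 / 2)
  convert (hlin.add hconst).comp hsq using 1
  · ext r
    simp only [radialPrimitive, Function.comp]
    ring
  · simp

theorem integral_Ioi_abs_deriv_radialPrimitive (t : ℝ) :
    ∫ r in Ioi 0, |r * exp (-r ^ 2) * (t ^ 2 - 2 * r ^ 2)|
      = 2 * exp (-t ^ 2 / 2) - 1 + t ^ 2 / 2 := by
  obtain ⟨c, hc0, hc⟩ : ∃ c : ℝ, 0 ≤ c ∧ c ^ 2 = t ^ 2 / 2 :=
    ⟨√(t ^ 2 / 2), sqrt_nonneg _, sq_sqrt (by positivity)⟩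
  have hinc : ∀ r ∈ Ioc 0 c, 0 ≤ r * exp (-r ^ 2) * (t ^ 2 - 2 * r ^ 2) := by
    rintro r ⟨hr, hrc⟩
    have : r ^ 2 ≤ c ^ 2 := pow_le_pow_left₀ hr.le hrc 2
    have : 0 ≤ t ^ 2 - 2 * r ^ 2 := by linarith
    positivity
  have hdec : ∀ r ∈ Ioi c, r * exp (-r ^ 2) * (t ^ 2 - 2 * r ^ 2) ≤ 0 := by
    intro r hrc
    have hr : 0 < r := hc0.trans_lt hrc
    have : c ^ 2 < r ^ 2 := pow_lt_pow_left₀ hrc hc0 two_ne_zero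
    exact mul_nonpos_of_nonneg_of_nonpos (by positivity) (by linarith)
  rw [integral_Ioi_abs_deriv_of_unimodal hc0 (fun r _ => hasDerivAt_radialPrimitive t r)
    (by apply Continuous.intervalIntegrable; fun_prop) hinc hdec (tendsto_radialPrimitive_atTop t)]
  simp only [radialPrimitive, hc, zero_pow two_ne_zero, neg_zero, exp_zero]
  ring_nf

/-- The Gaussian integral over `1×1` complex symmetric matrices appearing in the
universal density of critical values of random holomorphic sections (dimension
one case): `∫_ℂ e^{-|ξ|²} |2|ξ|² - t²| dA(ξ) = π (t² - 2 + 4 e^{-t²/2})`. -/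
theorem critical_value_density_dim_one (t : ℝ) :
    ∫ ξ : ℂ, Real.exp (-‖ξ‖ ^ 2) * |2 * ‖ξ‖ ^ 2 - t ^ 2|
      = Real.pi * (t ^ 2 - 2 + 4 * Real.exp (-t ^ 2 / 2)) := by
  have habs : EqOn (fun r => r * (exp (-r ^ 2) * |2 * r ^ 2 - t ^ 2|))
      (fun r => |r * exp (-r ^ 2) * (t ^ 2 - 2 * r ^ 2)|) (Ioi 0) := by
    intro r hr
    simp only [abs_mul, abs_of_pos (show (0 : ℝ) < r from hr), abs_of_pos (exp_pos _),
      abs_sub_comm (t ^ 2)]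
    ring
  rw [Complex.integral_fun_norm (fun r => exp (-r ^ 2) * |2 * r ^ 2 - t ^ 2|),
    setIntegral_congr_fun measurableSet_Ioi habs, integral_Ioi_abs_deriv_radialPrimitive]
  ring
end
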